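/- arXiv:2107.06248 — 4 statements merged into one kernel-verified Lean document; each statement's English description precedes it below -/
import Mathlib

section
/- There exists a constant K such that for every k ≥ K and every subgroup H of G = Sym(k) satisfying log|H| ≤ (1/4)·k·log k and |H/H'| ≤ 3^(k/3), one has log|H/H'| ≤ 16 · log|G:H| / log log |G:H|. -/
/-!
Since `|G : H| = k! / |H|` and `log k! ≥ k (log k - 2)` (from `k^k / k! ≤ e^k`), the hypothesis
`log |H| ≤ (k log k) / 4` forces `log |G : H| ≥ (k log k) / 8`, while `|G : H| ≤ k! ≤ 2^(k^2)` gives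
`log log |G : H| ≤ 2 log k`. So the right-hand side is at least `k`, and the left-hand side is at
most `log 3^(k/3) ≤ k`.
-/

open Nat Real

theorem Nat.pow_self_le_four_pow_mul_factorial (n : ℕ) : n ^ n ≤ 4 ^ n * n ! := by
  have hexp : (n : ℝ) ^ n / n ! ≤ exp n := pow_div_factorial_le_exp _ n.cast_nonneg n
  have hexp_le : exp n ≤ (4 : ℝ) ^ n := by
    rw [← exp_one_pow]
    exact pow_le_pow_left₀ (exp_nonneg 1) (exp_one_lt_d9.le.trans (by norm_num)) n
  rw [div_le_iff₀ (by positivity)] at hexp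
  exact_mod_cast hexp.trans (mul_le_mul_of_nonneg_right hexp_le (by positivity))

theorem Nat.factorial_le_two_pow_sq (n : ℕ) : n ! ≤ 2 ^ (n ^ 2) :=
  calc n ! ≤ n ^ n := factorial_le_pow n
    _ ≤ (2 ^ n) ^ n := Nat.pow_le_pow_left n.lt_two_pow_self.le n
    _ = 2 ^ (n ^ 2) := by rw [← pow_mul, sq]

theorem Real.mul_logb_two_sub_two_le_logb_factorial (n : ℕ) :
    n * (logb 2 n - 2) ≤ logb 2 n ! := by
  rcases n.eq_zero_or_pos with rfl | hn
  · simp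
  have hlog := logb_le_logb_of_le one_lt_two (by positivity)
    (Nat.cast_le (α := ℝ).2 n.pow_self_le_four_pow_mul_factorial)
  have hfac : (0 : ℝ) < n ! := by exact_mod_cast n.factorial_pos
  push_cast at hlog
  rw [logb_pow, logb_mul (by positivity) hfac.ne', logb_pow,
    show (4 : ℝ) = 2 ^ 2 by norm_num, logb_pow, logb_self_eq_one one_lt_two, Nat.cast_ofNat] at hlog
  linarith

theorem Subgroup.logb_card_add_logb_index {G : Type*} [Group G] [Finite G] (H : Subgroup G)
    (b : ℝ) : logb b (Nat.card H) + logb b H.index = logb b (Nat.card G) := by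
  rw [← logb_mul (by exact_mod_cast Nat.card_pos.ne') (by exact_mod_cast H.index_ne_zero_of_finite),
    ← Nat.cast_mul, H.card_mul_index]

theorem Subgroup.logb_two_index_le_sq {α : Type*} [Finite α] (H : Subgroup (Equiv.Perm α)) :
    logb 2 H.index ≤ (Nat.card α : ℝ) ^ 2 := by
  have hdvd : H.index ∣ (Nat.card α)! := by
    simpa only [Nat.card_perm] using H.index_dvd_card
  have := logb_le_logb_of_le one_lt_two (by exact_mod_cast H.index_ne_zero_of_finite.bot_lt)
    (Nat.cast_le (α := ℝ).2 ((Nat.le_of_dvd (factorial_pos _) hdvd).trans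
      (factorial_le_two_pow_sq _)))
  rwa [Nat.cast_pow, Nat.cast_ofNat, logb_pow, logb_self_eq_one one_lt_two, mul_one,
    Nat.cast_pow] at this

theorem Real.three_rpow_div_three_le_two_rpow {t : ℝ} (ht : 0 ≤ t) : (3 : ℝ) ^ (t / 3) ≤ 2 ^ t :=
  calc (3 : ℝ) ^ (t / 3) ≤ (2 ^ (3 : ℝ)) ^ (t / 3) :=
        rpow_le_rpow (by norm_num) (by norm_num) (by positivity)
    _ = 2 ^ t := by rw [← rpow_mul zero_le_two]; ring_nf

theorem Real.div_two_le_div_logb {b a k L : ℝ} (hb : 1 < b) (hL : 1 < L) (hLk : L ≤ k ^ 2)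
    (haL : a * logb b k ≤ L) : a / 2 ≤ L / logb b L := by
  have hlogL : 0 < logb b L := logb_pos hb hL
  have hlogL_le : logb b L ≤ 2 * logb b k := by
    calc logb b L ≤ logb b (k ^ 2) := logb_le_logb_of_le hb (by linarith) hLk
      _ = 2 * logb b k := by rw [logb_pow]; norm_num
  rw [le_div_iff₀ hlogL]
  nlinarith

/-- There exists a constant `K` such that for every `k ≥ K` and every subgroup
`H ≤ G = Sym(k)` satisfying `log₂ |H| ≤ (1/4)·k·log₂ k` and `|H/H'| ≤ 3^(k/3)`,
one has `log₂ |H/H'| ≤ 16 · log₂ |G:H| / log₂ log₂ |G:H|`. -/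
theorem small_subgroup_abelianization_bound :
    ∃ K : ℕ, ∀ (k : ℕ), K ≤ k → ∀ H : Subgroup (Equiv.Perm (Fin k)),
      Real.logb 2 (Nat.card H) ≤ (1 / 4 : ℝ) * k * Real.logb 2 k →
      (Nat.card (Abelianization H) : ℝ) ≤ (3 : ℝ) ^ ((k : ℝ) / 3) →
      Real.logb 2 (Nat.card (Abelianization H)) ≤
        16 * Real.logb 2 (H.index) / Real.logb 2 (Real.logb 2 (H.index)) := by
  refine ⟨16, fun k hk H hH hAb => ?_⟩
  have hlogk : 4 ≤ logb 2 k := by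
    have := logb_le_logb_of_le one_lt_two (by norm_num) (Nat.cast_le (α := ℝ).2 hk)
    rwa [show ((16 : ℕ) : ℝ) = 2 ^ 4 by norm_num, logb_pow, logb_self_eq_one one_lt_two,
      mul_one] at this
  have hindex_ge : k / 8 * logb 2 k ≤ logb 2 H.index := by
    have hsum := H.logb_card_add_logb_index 2
    rw [Nat.card_perm, Nat.card_fin] at hsum
    have := mul_logb_two_sub_two_le_logb_factorial k
    nlinarith [mul_nonneg k.cast_nonneg (by linarith : (0 : ℝ) ≤ logb 2 k - 4)]
  have hindex_le : logb 2 H.index ≤ (k : ℝ) ^ 2 := by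
    simpa only [Nat.card_fin] using H.logb_two_index_le_sq
  have hlogAb : logb 2 (Nat.card (Abelianization H)) ≤ k :=
    (logb_le_iff_le_rpow one_lt_two (by exact_mod_cast Nat.card_pos)).2
      (hAb.trans (three_rpow_div_three_le_two_rpow k.cast_nonneg))
  calc logb 2 (Nat.card (Abelianization H)) ≤ k := hlogAb
    _ = 16 * ((k / 8) / 2) := by ring
    _ ≤ 16 * (logb 2 H.index / logb 2 (logb 2 H.index)) := by
        have hk16 : (16 : ℝ) ≤ k := by exact_mod_cast hk
        have := div_two_le_div_logb one_lt_two (by nlinarith) hindex_le hindex_ge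
        linarith
    _ = _ := (mul_div_assoc _ _ _).symm
end

section
/- For all natural numbers k and b with 2 ≤ b ≤ k/2 and b dividing k, one has ln(k!) − ln(b!) − b·ln((k/b)!) ≥ (k−1)·ln b − b·ln k. -/
/-!
Comparing `log n! = ∑_{i ≤ n} log i` with `∫₁ⁿ log x dx = n log n - n + 1` gives
`n log n - n + 1 ≤ log n! ≤ (n + 1) log n - n + 1`. Write `k = b m`, bound `log k!` from below and
`log b!`, `log m!` from above: the terms without logarithms cancel, and with
`log k = log b + log m` what remains is exactly `(k - 1) log b - b log k`.
-/

open Real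
open scoped Nat

lemma log_add_one_sub_log_le_inv {x : ℝ} (hx : 0 < x) : log (x + 1) - log x ≤ x⁻¹ := by
  have h := log_le_sub_one_of_pos (show 0 < (x + 1) / x by positivity)
  rwa [log_div (by positivity) hx.ne', add_div, div_self hx.ne', one_div, add_sub_cancel_left] at h

lemma inv_add_one_le_log_add_one_sub_log {x : ℝ} (hx : 0 < x) :
    (x + 1)⁻¹ ≤ log (x + 1) - log x := by
  have h := one_sub_inv_le_log_of_pos (show 0 < (x + 1) / x by positivity)
  rwa [log_div (by positivity) hx.ne', inv_div, one_sub_div (show x + 1 ≠ 0 by positivity),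
    add_sub_cancel_left, one_div] at h

lemma log_factorial_succ (n : ℕ) : log (n + 1)! = log (n + 1) + log n ! := by
  rw [Nat.factorial_succ, Nat.cast_mul, Nat.cast_add_one, log_mul (by positivity) (by positivity)]

lemma mul_log_sub_add_one_le_log_factorial {n : ℕ} (hn : n ≠ 0) :
    n * log n - n + 1 ≤ log n ! := by
  induction n, Nat.one_le_iff_ne_zero.mpr hn using Nat.le_induction with
  | base => simp
  | succ n hn1 ih =>
    have hn' : (0 : ℝ) < n := by exact_mod_cast hn1
    have h := mul_le_mul_of_nonneg_left (log_add_one_sub_log_le_inv hn') hn'.le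
    rw [mul_inv_cancel₀ hn'.ne'] at h
    rw [log_factorial_succ]
    push_cast
    nlinarith [ih (by omega)]

lemma log_factorial_le (n : ℕ) : log n ! ≤ (n + 1) * log n - n + 1 := by
  obtain rfl | hn := eq_or_ne n 0
  · simp
  induction n, Nat.one_le_iff_ne_zero.mpr hn using Nat.le_induction with
  | base => simp
  | succ n hn1 ih =>
    have hn' : (0 : ℝ) < n := by exact_mod_cast hn1
    have h := mul_le_mul_of_nonneg_left (inv_add_one_le_log_add_one_sub_log hn')
      (by positivity : (0 : ℝ) ≤ n + 1)
    rw [mul_inv_cancel₀ (by positivity)] at h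
    rw [log_factorial_succ]
    push_cast
    nlinarith [ih (by omega)]

/-- For all `k, b` with `2 ≤ b ≤ k/2` and `b ∣ k`, one has
`ln(k!) − ln(b!) − b·ln((k/b)!) ≥ (k−1)·ln b − b·ln k`. -/
theorem log_index_wreath_lower_bound (k b : ℕ) (hb : 2 ≤ b) (hbk : 2 * b ≤ k)
    (hdvd : b ∣ k) :
    Real.log (Nat.factorial k) - Real.log (Nat.factorial b)
        - (b : ℝ) * Real.log (Nat.factorial (k / b)) ≥
      ((k : ℝ) - 1) * Real.log b - (b : ℝ) * Real.log k := by
  obtain ⟨m, rfl⟩ := hdvd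
  have hm : m ≠ 0 := by rintro rfl; omega
  rw [Nat.mul_div_cancel_left m (by omega)]
  have hlog : log (b * m : ℕ) = log b + log m := by
    push_cast
    exact log_mul (by positivity) (by positivity)
  have hk := mul_log_sub_add_one_le_log_factorial (mul_ne_zero (by omega : b ≠ 0) hm)
  have hm_le := mul_le_mul_of_nonneg_left (log_factorial_le m) (b.cast_nonneg : (0 : ℝ) ≤ b)
  rw [hlog] at hk ⊢
  push_cast at hk ⊢
  linarith [log_factorial_le b]
end

section
/- The limit as the real number x tends to +∞ of [ log( (x·log x)/(2·log log x) ) / log log( (x·log x)/(2·log log x) ) − (log x)/(log log x) ] equals 1. -/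
open Filter Real

noncomputable def Yf (x : ℝ) : ℝ := Real.logb 2 x
noncomputable def Zf (x : ℝ) : ℝ := Real.logb 2 (Yf x)
noncomputable def Wf (x : ℝ) : ℝ := Real.logb 2 (Zf x)
noncomputable def Sf (x : ℝ) : ℝ := Zf x - 1 - Wf x
noncomputable def Ef (x : ℝ) : ℝ := Real.logb 2 (1 + Sf x / Yf x)

lemma hY : Tendsto Yf atTop atTop := Real.tendsto_logb_atTop one_lt_two

lemma hZ : Tendsto Zf atTop atTop :=
  (Real.tendsto_logb_atTop one_lt_two).comp hY

lemma hW : Tendsto Wf atTop atTop :=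
  (Real.tendsto_logb_atTop one_lt_two).comp hZ

lemma logb_div_self_tendsto :
    Tendsto (fun t : ℝ => Real.logb 2 t / t) atTop (nhds 0) := by
  have h := Real.isLittleO_log_id_atTop.tendsto_div_nhds_zero
  have : (fun t : ℝ => Real.logb 2 t / t)
      = fun t => (Real.log t / t) * (Real.log 2)⁻¹ := by
    funext t
    rw [Real.logb, div_div, mul_comm, ← div_div]
    ring
  rw [this]
  simpa using h.mul_const (Real.log 2)⁻¹

lemma haux : Tendsto (fun t : ℝ => t - 1 - Real.logb 2 t) atTop atTop := by
  have h : ∀ᶠ t : ℝ in atTop, t / 2 - 1 ≤ t - 1 - Real.logb 2 t := by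
    have h2 : Tendsto (fun t : ℝ => Real.logb 2 t / t) atTop (nhds 0) :=
      logb_div_self_tendsto
    have h3 : ∀ᶠ t : ℝ in atTop, Real.logb 2 t / t ≤ 1/2 :=
      h2.eventually_le_const (by norm_num)
    filter_upwards [h3, eventually_gt_atTop (0:ℝ)] with t ht ht0
    have : Real.logb 2 t ≤ t / 2 := by
      rw [div_le_iff₀ ht0] at ht
      linarith
    linarith
  apply tendsto_atTop_mono' _ h
  apply Filter.Tendsto.atTop_add _ tendsto_const_nhds
  exact Tendsto.atTop_div_const (by norm_num) tendsto_id

lemma hS : Tendsto Sf atTop atTop := by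
  have : Sf = (fun t => t - 1 - Real.logb 2 t) ∘ Zf := rfl
  rw [this]; exact haux.comp hZ

lemma hSY : Tendsto (fun x => Sf x / Yf x) atTop (nhds 0) := by
  apply squeeze_zero'
  · filter_upwards [hS.eventually_ge_atTop 0, hY.eventually_gt_atTop 0] with x hs hy
    positivity
  · filter_upwards [hW.eventually_ge_atTop 0, hY.eventually_gt_atTop 0] with x hw hy
    show Sf x / Yf x ≤ Zf x / Yf x
    have : Sf x ≤ Zf x := by unfold Sf; linarith
    gcongr
  · exact logb_div_self_tendsto.comp hY

lemma hEnn : ∀ᶠ x in atTop, 0 ≤ Ef x := by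
  filter_upwards [hS.eventually_ge_atTop 0, hY.eventually_gt_atTop 0] with x hs hy
  have : 0 ≤ Sf x / Yf x := div_nonneg hs hy.le
  exact Real.logb_nonneg one_lt_two (by linarith)

lemma hE : Tendsto Ef atTop (nhds 0) := by
  have h1 : Tendsto (fun x => 1 + Sf x / Yf x) atTop (nhds 1) := by
    simpa using hSY.const_add 1
  have h2 : Tendsto (fun t : ℝ => Real.logb 2 t) (nhds 1) (nhds 0) := by
    have h3 : ContinuousAt (fun t : ℝ => Real.log t / Real.log 2) 1 :=
      (Real.continuousAt_log one_ne_zero).div_const _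
    simpa [Real.logb, ContinuousAt] using h3.tendsto
  exact h2.comp h1

lemma hZE : Tendsto (fun x => Zf x + Ef x) atTop atTop :=
  tendsto_atTop_mono' _ (by filter_upwards [hEnn] with x h; linarith) hZ

lemma hSZ : Tendsto (fun x => Sf x / Zf x) atTop (nhds 1) := by
  have h : Tendsto (fun x => 1 - (Zf x)⁻¹ - Wf x / Zf x) atTop (nhds 1) := by
    have h1 : Tendsto (fun x => (Zf x)⁻¹) atTop (nhds 0) :=
      tendsto_inv_atTop_zero.comp hZ
    have h2 : Tendsto (fun x => Wf x / Zf x) atTop (nhds 0) :=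
      logb_div_self_tendsto.comp hZ
    simpa using (tendsto_const_nhds.sub h1).sub h2
  apply h.congr'
  filter_upwards [hZ.eventually_gt_atTop 0] with x hz
  unfold Sf
  field_simp

lemma hQ : Tendsto (fun x => Zf x / (Zf x + Ef x)) atTop (nhds 1) := by
  have h : Tendsto (fun x => (1 + Ef x * (Zf x)⁻¹)⁻¹) atTop (nhds 1) := by
    have h1 : Tendsto (fun x => Ef x * (Zf x)⁻¹) atTop (nhds 0) := by
      simpa using hE.mul (tendsto_inv_atTop_zero.comp hZ)
    have h2 : Tendsto (fun x => 1 + Ef x * (Zf x)⁻¹) atTop (nhds 1) := by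
      simpa using h1.const_add 1
    simpa using h2.inv₀ one_ne_zero
  apply h.congr'
  filter_upwards [hZ.eventually_gt_atTop 0, hZE.eventually_gt_atTop 0] with x hz hze
  rw [eq_div_iff hze.ne']
  field_simp

lemma T1 : Tendsto (fun x => Sf x / (Zf x + Ef x)) atTop (nhds 1) := by
  have h := hSZ.mul hQ
  rw [mul_one] at h
  apply h.congr'
  filter_upwards [hZ.eventually_gt_atTop 0] with x hz
  rw [div_mul_div_comm, mul_comm (Zf x), mul_div_mul_right _ _ hz.ne']

lemma T2 : Tendsto (fun x => Yf x * Ef x / (Zf x * (Zf x + Ef x))) atTop (nhds 0) := by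
  have hlog2 : 0 < Real.log 2 := Real.log_pos one_lt_two
  apply squeeze_zero' (g := fun x => (Real.log 2 * (Zf x + Ef x))⁻¹)
  · filter_upwards [hEnn, hY.eventually_gt_atTop 0, hZ.eventually_gt_atTop 0,
      hZE.eventually_gt_atTop 0] with x he hy hz hze
    positivity
  · filter_upwards [hEnn, hY.eventually_gt_atTop 0, hZ.eventually_gt_atTop 0,
      hW.eventually_ge_atTop 0, hS.eventually_ge_atTop 0,
      hZE.eventually_gt_atTop 0] with x he hy hz hw hs hze
    have hpos : (0:ℝ) < 1 + Sf x / Yf x := by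
      have := div_nonneg hs hy.le; linarith
    have h1 : Ef x ≤ (Sf x / Yf x) / Real.log 2 := by
      have h2 := Real.log_le_sub_one_of_pos hpos
      have h3 : Real.log (1 + Sf x / Yf x) ≤ Sf x / Yf x := by linarith
      unfold Ef Real.logb
      gcongr
    have h4 : Yf x * Ef x ≤ Zf x / Real.log 2 := by
      have h5 : Yf x * Ef x ≤ Yf x * ((Sf x / Yf x) / Real.log 2) :=
        mul_le_mul_of_nonneg_left h1 hy.le
      have h6 : Yf x * ((Sf x / Yf x) / Real.log 2) = Sf x / Real.log 2 := by
        field_simp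
      have h7 : Sf x ≤ Zf x := by unfold Sf; linarith
      rw [h6] at h5
      calc Yf x * Ef x ≤ Sf x / Real.log 2 := h5
        _ ≤ Zf x / Real.log 2 := by gcongr
    calc Yf x * Ef x / (Zf x * (Zf x + Ef x))
        ≤ (Zf x / Real.log 2) / (Zf x * (Zf x + Ef x)) := by gcongr
      _ = (Real.log 2 * (Zf x + Ef x))⁻¹ := by
          rw [div_div, show Real.log 2 * (Zf x * (Zf x + Ef x))
              = Zf x * (Real.log 2 * (Zf x + Ef x)) by ring,
            ← div_div, div_self hz.ne', one_div]
  · exact tendsto_inv_atTop_zero.comp (hZE.const_mul_atTop hlog2)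

/-- The limit as `x → +∞` of
`log₂((x·log₂ x)/(2·log₂ log₂ x)) / log₂ log₂((x·log₂ x)/(2·log₂ log₂ x)) − log₂ x / log₂ log₂ x`
equals `1`. -/
theorem limit_loglog_ratio :
    Tendsto (fun x : ℝ =>
        Real.logb 2 (x * Real.logb 2 x / (2 * Real.logb 2 (Real.logb 2 x))) /
          Real.logb 2 (Real.logb 2
            (x * Real.logb 2 x / (2 * Real.logb 2 (Real.logb 2 x)))) -
        Real.logb 2 x / Real.logb 2 (Real.logb 2 x))
      atTop (nhds 1) := by
  have h := T1.sub T2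
  rw [sub_zero] at h
  apply h.congr'
  filter_upwards [eventually_gt_atTop (0:ℝ), hY.eventually_gt_atTop 0,
    hZ.eventually_gt_atTop 0, hW.eventually_ge_atTop 0, hS.eventually_ge_atTop 0,
    hZE.eventually_gt_atTop 0] with x hx hy hz hw hs hze
  have hA : Real.logb 2 (x * Yf x / (2 * Zf x)) = Yf x + Sf x := by
    rw [Real.logb_div (by positivity : (0:ℝ) < x * Yf x).ne'
        (by positivity : (0:ℝ) < 2 * Zf x).ne',
      Real.logb_mul hx.ne' hy.ne', Real.logb_mul two_ne_zero hz.ne',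
      Real.logb_self_eq_one one_lt_two]
    show Yf x + Zf x - (1 + Wf x) = Yf x + Sf x
    unfold Sf; ring
  have hpos : (0:ℝ) < 1 + Sf x / Yf x := by
    have := div_nonneg hs hy.le; linarith
  have hB : Real.logb 2 (Yf x + Sf x) = Zf x + Ef x := by
    have h1 : Yf x + Sf x = Yf x * (1 + Sf x / Yf x) := by field_simp
    rw [h1, Real.logb_mul hy.ne' hpos.ne']
    rfl
  show Sf x / (Zf x + Ef x) - Yf x * Ef x / (Zf x * (Zf x + Ef x)) =
    Real.logb 2 (x * Yf x / (2 * Zf x)) /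
      Real.logb 2 (Real.logb 2 (x * Yf x / (2 * Zf x))) - Yf x / Zf x
  rw [hA, hB]
  field_simp
  ring
end

section
/- For every natural number k ≥ 6 divisible by 3, there exists an abelian subgroup H of G = Sym(k) with |H| = 3^(k/3) (for instance, the elementary abelian 3-group generated by k/3 disjoint 3-cycles), and every such subgroup satisfies log|H| ≥ (log 3 / 6) · log|G:H| / log log |G:H|. -/
/-!
The `k / 3` disjoint 3-cycles generate an abelian subgroup of order `3 ^ (k / 3)`; in general,
`ι → G` embeds into `Perm (Σ _ : ι, G)` by letting each coordinate act by left multiplication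
on its own copy of `G`.

For the inequality, `|H| = 3 ^ m` with `k = 3 m`, so it suffices that `L / log L ≤ k` for
`L = log |G : H|`. Since `|G : H| ≤ k! ≤ k ^ k` we have `L ≤ k log k`, and `|G : H| ≥ 8`
(as `k! ≥ 8 · 3 ^ m`) puts `L` in the range `[e, ∞)` where `x / log x` is monotone, so `L / log L` is at most
`k log k / log (k log k) ≤ k`.
-/

open Equiv Real Nat

theorem Equiv.Perm.exists_isMulCommutative_subgroup_card_eq_pow (G ι α : Type*) [CommGroup G]
    [Finite ι] (e : (Σ _ : ι, G) ≃ α) :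
    ∃ H : Subgroup (Perm α), IsMulCommutative H ∧ Nat.card H = Nat.card G ^ Nat.card ι := by
  let ψ : (ι → G) →* Perm α := (permCongrHom e).toMonoidHom.comp <|
    (Perm.sigmaCongrRightHom _).comp <| MonoidHom.piMap fun _ => MulAction.toPermHom G G
  have hψ : Function.Injective ψ :=
    (permCongrHom e).injective.comp <| Perm.sigmaCongrRightHom_injective.comp <|
      Pi.map_injective.mpr fun _ => MulAction.toPerm_injective
  refine ⟨(⊤ : Subgroup (ι → G)).map ψ, inferInstance, ?_⟩
  rw [Subgroup.card_map_of_injective hψ, Subgroup.card_top, Nat.card_fun]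

theorem eight_mul_three_pow_le_factorial {m : ℕ} (hm : 2 ≤ m) : 8 * 3 ^ m ≤ (3 * m)! :=
  calc 8 * 3 ^ m ≤ 4 ! * 5 ^ m := Nat.mul_le_mul (by decide) (Nat.pow_le_pow_left (by norm_num) m)
    _ ≤ (4 + m)! := factorial_mul_pow_le_factorial
    _ ≤ (3 * m)! := factorial_le (by omega)

theorem Real.div_log_le_div_log_of_le {x y : ℝ} (hx : exp 1 ≤ x) (hxy : x ≤ y) :
    x / log x ≤ y / log y := by
  have hy : exp 1 ≤ y := hx.trans hxy
  have hlog_div_pos : 0 < log y / y :=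
    div_pos (log_pos ((one_lt_exp_iff.mpr one_pos).trans_le hy)) ((exp_pos 1).trans_le hy)
  rw [← one_div_div (log x), ← one_div_div (log y)]
  exact one_div_le_one_div_of_le hlog_div_pos (log_div_self_antitoneOn hx hy hxy)

theorem Real.div_logb_le_of_le_mul_logb {b x n : ℝ} (hb : 1 < b) (hx : exp 1 ≤ x) (hn : b ≤ n)
    (hxn : x ≤ n * logb b n) : x / logb b x ≤ n := by
  have hn0 : 0 < n := by linarith
  have hlogn : 1 ≤ logb b n := (le_logb_iff_rpow_le hb hn0).mpr (by simpa using hn)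
  have hdiv_logb (z : ℝ) : z / logb b z = z / log z * log b := by
    rw [logb, div_div_eq_mul_div, mul_div_right_comm]
  calc x / logb b x = x / log x * log b := hdiv_logb x
    _ ≤ n * logb b n / log (n * logb b n) * log b :=
      mul_le_mul_of_nonneg_right (div_log_le_div_log_of_le hx hxn) (log_pos hb).le
    _ = n * logb b n / logb b (n * logb b n) := (hdiv_logb _).symm
    _ ≤ n * logb b n / logb b n := by
      gcongr
      exact le_mul_of_one_le_right hn0.le hlogn
    _ = n := by field_simp

theorem Equiv.Perm.logb_index_div_logb_logb_index_le {α : Type*} [Finite α]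
    {H : Subgroup (Perm α)} (hH : 8 ≤ H.index) :
    logb 2 H.index / logb 2 (logb 2 H.index) ≤ Nat.card α := by
  have hindex_le : H.index ≤ Nat.card α ^ Nat.card α := calc
    H.index ≤ Nat.card (Perm α) := Nat.le_of_dvd Nat.card_pos H.index_dvd_card
    _ = (Nat.card α)! := Nat.card_perm
    _ ≤ Nat.card α ^ Nat.card α := factorial_le_pow _
  have hcard : 2 ≤ Nat.card α := by
    by_contra! h
    interval_cases h : Nat.card α <;> simp at hindex_le <;> omega
  have hL_ge : exp 1 ≤ logb 2 H.index := calc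
    exp 1 ≤ 3 := exp_one_lt_d9.le.trans (by norm_num)
    _ = logb 2 8 := by rw [show (8 : ℝ) = 2 ^ (3 : ℝ) by norm_num, logb_rpow two_pos (by norm_num)]
    _ ≤ logb 2 H.index := logb_le_logb_of_le one_lt_two (by norm_num) (by exact_mod_cast hH)
  refine div_logb_le_of_le_mul_logb one_lt_two hL_ge (by exact_mod_cast hcard) ?_
  rw [← logb_pow]
  exact logb_le_logb_of_le one_lt_two (by exact_mod_cast (by omega : 0 < H.index))
    (by exact_mod_cast hindex_le)

/-- For every `k ≥ 6` divisible by `3`, the symmetric group `G = Sym(k)` has an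
abelian subgroup `H` with `|H| = 3^(k/3)`, and every abelian subgroup of that
order satisfies `log₂ |H| ≥ (log₂ 3 / 6) · log₂ |G:H| / log₂ log₂ |G:H|`. -/
theorem elementary_abelian_subgroup_sharpness (k : ℕ) (hk : 6 ≤ k) (h3 : 3 ∣ k) :
    (∃ H : Subgroup (Equiv.Perm (Fin k)), IsMulCommutative H ∧
        Nat.card H = 3 ^ (k / 3)) ∧
      ∀ H : Subgroup (Equiv.Perm (Fin k)), IsMulCommutative H →
        Nat.card H = 3 ^ (k / 3) →
        Real.logb 2 (Nat.card H) ≥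
          (Real.logb 2 3 / 6) * Real.logb 2 (H.index) /
            Real.logb 2 (Real.logb 2 (H.index)) := by
  obtain ⟨m, rfl⟩ := h3
  have hm : 2 ≤ m := by omega
  rw [Nat.mul_div_cancel_left m three_pos]
  refine ⟨?_, fun H _ hH => ?_⟩
  · simpa using Perm.exists_isMulCommutative_subgroup_card_eq_pow (Multiplicative (ZMod 3))
      (Fin m) (Fin (3 * m)) (Fintype.equivOfCardEq (by simp [mul_comm]))
  have hlagrange : 3 ^ m * H.index = (3 * m)! := by
    rw [← hH, Subgroup.card_mul_index, Nat.card_perm, Nat.card_fin]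
  have hindex_ge : 8 ≤ H.index := by
    have h := eight_mul_three_pow_le_factorial hm
    rw [← hlagrange, mul_comm 8] at h
    exact Nat.le_of_mul_le_mul_left h (by positivity)
  have hratio := Perm.logb_index_div_logb_logb_index_le hindex_ge
  have hlog3 : 0 ≤ logb 2 3 := (logb_pos one_lt_two (by norm_num)).le
  rw [Nat.card_fin, Nat.cast_mul, Nat.cast_ofNat] at hratio
  rw [hH, Nat.cast_pow, logb_pow, mul_div_assoc, ge_iff_le]
  calc logb 2 3 / 6 * (logb 2 H.index / logb 2 (logb 2 H.index))
      ≤ logb 2 3 / 6 * (3 * m) := mul_le_mul_of_nonneg_left hratio (by positivity)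
    _ ≤ m * logb 2 3 := by nlinarith
end
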